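/- arXiv:1503.01553 — 2 statements merged into one kernel-verified Lean document; each statement's English description precedes it below -/
import Mathlib

section
/- For self-adjoint operators P, Q on a Hilbert space satisfying the canonical commutation relation [P,Q] = iθ·1 on a common invariant dense domain (θ ∈ ℝ), and for any unit vector ψ in the domain, the standard deviations satisfy σ_P(ψ) · σ_Q(ψ) ≥ |θ|/2, where σ_A(ψ) = √(⟨Aψ, Aψ⟩ − ⟨ψ, Aψ⟩²). -/
/-!
Centre `P` and `Q` at their expectations: `u = Pψ - ⟨P⟩ψ`, `v = Qψ - ⟨Q⟩ψ`. Then `σ_P = ‖u‖`,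
`σ_Q = ‖v‖`, and since the expectations are real, `Im ⟪u, v⟫ = Im ⟪Pψ, Qψ⟫`. Symmetry turns
`2 Im ⟪Pψ, Qψ⟫` into `Im ⟪ψ, [P, Q] ψ⟫ = θ`, and Cauchy–Schwarz gives `|θ| / 2 ≤ ‖u‖ ‖v‖`.
-/

open RCLike
open scoped InnerProductSpace

section

variable {𝕜 E : Type*} [RCLike 𝕜] [NormedAddCommGroup E] [InnerProductSpace 𝕜 E]

theorem norm_sub_re_inner_smul_sq {ψ : E} (hψ : ‖ψ‖ = 1) (x : E) :
    ‖x - ((re ⟪ψ, x⟫_𝕜 : ℝ) : 𝕜) • ψ‖ ^ 2 = ‖x‖ ^ 2 - re ⟪ψ, x⟫_𝕜 ^ 2 := by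
  rw [norm_sub_sq (𝕜 := 𝕜), inner_smul_right, norm_smul, hψ, re_ofReal_mul, inner_re_symm x ψ,
    norm_ofReal, mul_one, sq_abs]
  ring

theorem sqrt_re_inner_self_sub_sq_eq_norm {ψ : E} (hψ : ‖ψ‖ = 1) (x : E) :
    √(re ⟪x, x⟫_𝕜 - re ⟪ψ, x⟫_𝕜 ^ 2) = ‖x - ((re ⟪ψ, x⟫_𝕜 : ℝ) : 𝕜) • ψ‖ := by
  rw [inner_self_eq_norm_sq (𝕜 := 𝕜), ← norm_sub_re_inner_smul_sq hψ,
    Real.sqrt_sq (norm_nonneg _)]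

theorem im_inner_sub_smul_sub_smul {x y ψ : E} (hx : im ⟪x, ψ⟫_𝕜 = 0) (hy : im ⟪ψ, y⟫_𝕜 = 0)
    (a b : ℝ) : im ⟪x - (a : 𝕜) • ψ, y - (b : 𝕜) • ψ⟫_𝕜 = im ⟪x, y⟫_𝕜 := by
  simp only [inner_sub_left, inner_sub_right, inner_smul_left, inner_smul_right, conj_ofReal,
    map_sub, im_ofReal_mul, hx, hy, inner_self_im]
  ring

theorem abs_im_inner_le_norm_sub_smul_mul {x y ψ : E} (hx : im ⟪x, ψ⟫_𝕜 = 0)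
    (hy : im ⟪ψ, y⟫_𝕜 = 0) (a b : ℝ) :
    |im ⟪x, y⟫_𝕜| ≤ ‖x - (a : 𝕜) • ψ‖ * ‖y - (b : 𝕜) • ψ‖ := by
  rw [← im_inner_sub_smul_sub_smul hx hy a b]
  exact (abs_im_le_norm _).trans (norm_inner_le_norm _ _)

def LinearMap.IsSymmetricOn (A : E →ₗ[𝕜] E) (D : Submodule 𝕜 E) : Prop :=
  ∀ x ∈ D, ∀ y ∈ D, ⟪A x, y⟫_𝕜 = ⟪x, A y⟫_𝕜

namespace LinearMap.IsSymmetricOn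

variable {A B : E →ₗ[𝕜] E} {D : Submodule 𝕜 E} {ψ : E}

theorem im_inner_apply_self (hA : A.IsSymmetricOn D) (hψ : ψ ∈ D) : im ⟪A ψ, ψ⟫_𝕜 = 0 := by
  rw [← conj_eq_iff_im, inner_conj_symm]
  exact (hA ψ hψ ψ hψ).symm

theorem im_inner_self_apply (hA : A.IsSymmetricOn D) (hψ : ψ ∈ D) : im ⟪ψ, A ψ⟫_𝕜 = 0 := by
  rw [← hA ψ hψ ψ hψ]
  exact hA.im_inner_apply_self hψ

theorem two_mul_im_inner_apply_apply (hA : A.IsSymmetricOn D) (hB : B.IsSymmetricOn D)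
    (hψ : ψ ∈ D) (hAψ : A ψ ∈ D) (hBψ : B ψ ∈ D) :
    2 * im ⟪A ψ, B ψ⟫_𝕜 = im ⟪ψ, A (B ψ) - B (A ψ)⟫_𝕜 := by
  rw [inner_sub_right, ← hA ψ hψ _ hBψ, ← hB ψ hψ _ hAψ, ← inner_conj_symm (B ψ), map_sub,
    conj_im]
  ring

end LinearMap.IsSymmetricOn

end

theorem stmt12_general {H : Type*} [NormedAddCommGroup H] [InnerProductSpace ℂ H]
    (D : Submodule ℂ H)
    (P Q : H →ₗ[ℂ] H) (θ : ℝ)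
    (hPD : ∀ x ∈ D, P x ∈ D) (hQD : ∀ x ∈ D, Q x ∈ D)
    (hPsym : ∀ x ∈ D, ∀ y ∈ D, (inner ℂ (P x) y : ℂ) = inner ℂ x (P y))
    (hQsym : ∀ x ∈ D, ∀ y ∈ D, (inner ℂ (Q x) y : ℂ) = inner ℂ x (Q y))
    (hCCR : ∀ x ∈ D, P (Q x) - Q (P x) = (Complex.I * θ) • x)
    (ψ : H) (hψD : ψ ∈ D) (hψ : ‖ψ‖ = 1) :
    Real.sqrt ((inner ℂ (P ψ) (P ψ) : ℂ).re - ((inner ℂ ψ (P ψ) : ℂ).re) ^ 2) *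
      Real.sqrt ((inner ℂ (Q ψ) (Q ψ) : ℂ).re - ((inner ℂ ψ (Q ψ) : ℂ).re) ^ 2) ≥
      |θ| / 2 := by
  have hP : P.IsSymmetricOn D := hPsym
  have hQ : Q.IsSymmetricOn D := hQsym
  have hcomm : 2 * (inner ℂ (P ψ) (Q ψ)).im = θ := by
    have h := hP.two_mul_im_inner_apply_apply hQ hψD (hPD ψ hψD) (hQD ψ hψD)
    rw [hCCR ψ hψD, inner_smul_right, inner_self_eq_norm_sq_to_K, hψ] at h
    simpa using h
  have hσ (x : H) : √((inner ℂ x x).re - (inner ℂ ψ x).re ^ 2) =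
      ‖x - ((inner ℂ ψ x).re : ℂ) • ψ‖ :=
    sqrt_re_inner_self_sub_sq_eq_norm (𝕜 := ℂ) hψ x
  rw [hσ, hσ]
  calc |θ| / 2 = |(inner ℂ (P ψ) (Q ψ)).im| := by rw [← hcomm, abs_mul]; norm_num
    _ ≤ _ := abs_im_inner_le_norm_sub_smul_mul (hP.im_inner_apply_self hψD)
      (hQ.im_inner_self_apply hψD) _ _

/-- Robertson uncertainty relation for a central commutator: if `P`, `Q` are
symmetric on a dense invariant domain `D` with `[P,Q] = iθ·1` on `D`, then for
any unit vector `ψ ∈ D` the standard deviations satisfy `σ_P σ_Q ≥ |θ|/2`. -/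
theorem stmt12 {H : Type*} [NormedAddCommGroup H] [InnerProductSpace ℂ H]
    (D : Submodule ℂ H) (hdense : Dense (D : Set H))
    (P Q : H →ₗ[ℂ] H) (θ : ℝ)
    (hPD : ∀ x ∈ D, P x ∈ D) (hQD : ∀ x ∈ D, Q x ∈ D)
    (hPsym : ∀ x ∈ D, ∀ y ∈ D, (inner ℂ (P x) y : ℂ) = inner ℂ x (P y))
    (hQsym : ∀ x ∈ D, ∀ y ∈ D, (inner ℂ (Q x) y : ℂ) = inner ℂ x (Q y))
    (hCCR : ∀ x ∈ D, P (Q x) - Q (P x) = (Complex.I * θ) • x)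
    (ψ : H) (hψD : ψ ∈ D) (hψ : ‖ψ‖ = 1) :
    Real.sqrt ((inner ℂ (P ψ) (P ψ) : ℂ).re - ((inner ℂ ψ (P ψ) : ℂ).re) ^ 2) *
      Real.sqrt ((inner ℂ (Q ψ) (Q ψ) : ℂ).re - ((inner ℂ ψ (Q ψ) : ℂ).re) ^ 2) ≥
      |θ| / 2 :=
  stmt12_general D P Q θ hPD hQD hPsym hQsym hCCR ψ hψD hψ
end

section
/- Let B_1, B_2 ∈ M_k(ℂ), I ∈ M_{k×n}(ℂ), J ∈ M_{n×k}(ℂ) satisfy the ADHM equations [B_1,B_1*] + [B_2,B_2*] + II* − J*J = 2(θ_{12}+θ_{34})·Id_k and [B_1,B_2] + IJ = 0. Let z_1, z_2 be elements of a unital ℂ-algebra A commuting with each other, with [z_1, z_1*] = −2θ_{12}·1, [z_2, z_2*] = −2θ_{34}·1, [z_1, z_2] = [z_1, z_2*] = 0, and define the operator Δ* = [[I, B_2+z_2, B_1+z_1],[J*, −B_1*−z_1*, B_2*+z_2*]] (blocks over M(ℂ)⊗A). Then Δ*Δ is block diagonal: Δ*Δ = diag(Γ, Γ) for some Γ ∈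 M_k(A). -/
open Matrix

/-- Horizontal concatenation of two `k × k` matrices into a `k × (k ⊕ k)` matrix. -/
def hcat {A : Type*} {k : ℕ} (M N : Matrix (Fin k) (Fin k) A) :
    Matrix (Fin k) (Fin k ⊕ Fin k) A :=
  Matrix.of fun i => Sum.elim (M i) (N i)

theorem hcat_mul_hcatH {A : Type*} [Ring A] [StarRing A] {k : ℕ}
    (M N P Q : Matrix (Fin k) (Fin k) A) :
    hcat M N * (hcat P Q)ᴴ = M * Pᴴ + N * Qᴴ := by
  ext i j
  simp [hcat, Matrix.mul_apply, Matrix.conjTranspose_apply, Fintype.sum_sum_type,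
    Matrix.add_apply]

private lemma aux_offdiag {R : Type*} [Ring R] (b1 b2 s1 s2 p : R)
    (hp : b1 * b2 - b2 * b1 + p = 0)
    (h1 : b2 * s1 = s1 * b2) (h2 : s2 * b1 = b1 * s2) (h3 : s2 * s1 = s1 * s2) :
    p + ((b2 + s2) * (-b1 - s1) + (b1 + s1) * (b2 + s2)) = 0 := by
  have e : p + ((b2 + s2) * (-b1 - s1) + (b1 + s1) * (b2 + s2))
      = (b1 * b2 - b2 * b1 + p) + (s1 * b2 - b2 * s1)
        + (b1 * s2 - s2 * b1) + (s1 * s2 - s2 * s1) := by noncomm_ring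
  rw [e, hp, h1, h2, h3]; simp

private lemma aux_offdiag' {R : Type*} [Ring R] (c1 c2 t1 t2 q : R)
    (hq : c2 * c1 - c1 * c2 + q = 0)
    (h1 : c1 * t2 = t2 * c1) (h2 : t1 * c2 = c2 * t1) (h3 : t1 * t2 = t2 * t1) :
    q + ((-c1 - t1) * (c2 + t2) + (c2 + t2) * (c1 + t1)) = 0 := by
  have e : q + ((-c1 - t1) * (c2 + t2) + (c2 + t2) * (c1 + t1))
      = (c2 * c1 - c1 * c2 + q) + (t2 * c1 - c1 * t2)
        + (c2 * t1 - t1 * c2) + (t2 * t1 - t1 * t2) := by noncomm_ring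
  rw [e, hq, h1, h2, h3]; simp

private lemma aux_diag {R : Type*} [Ring R]
    (b1 b2 c1 c2 s1 s2 t1 t2 u v w1 w2 : R)
    (hADHM : (b1 * c1 - c1 * b1) + (b2 * c2 - c2 * b2) + u - v = w1 + w2)
    (hz1 : s1 * t1 - t1 * s1 = -w1) (hz2 : s2 * t2 - t2 * s2 = -w2)
    (k1 : b1 * t1 = t1 * b1) (k2 : b2 * t2 = t2 * b2)
    (k3 : s1 * c1 = c1 * s1) (k4 : s2 * c2 = c2 * s2) :
    v + ((c1 + t1) * (b1 + s1) + (c2 + t2) * (b2 + s2))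
      = u + ((b2 + s2) * (c2 + t2) + (b1 + s1) * (c1 + t1)) := by
  have e : u + ((b2 + s2) * (c2 + t2) + (b1 + s1) * (c1 + t1))
      = (v + ((c1 + t1) * (b1 + s1) + (c2 + t2) * (b2 + s2)))
        + (((b1 * c1 - c1 * b1) + (b2 * c2 - c2 * b2) + u - v)
          + (s1 * t1 - t1 * s1) + (s2 * t2 - t2 * s2)
          + (b1 * t1 - t1 * b1) + (b2 * t2 - t2 * b2)
          + (s1 * c1 - c1 * s1) + (s2 * c2 - c2 * s2)) := by noncomm_ring
  rw [e, hADHM, hz1, hz2, k1, k2, k3, k4]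
  abel

/-- If the ADHM equations hold for `(B₁, B₂, I, J)` and `z₁, z₂` satisfy the
noncommutative-ℝ⁴ commutation relations, then `Δ*Δ` is block diagonal,
`Δ*Δ = diag(Γ, Γ)`. -/
theorem stmt16 {A : Type*} [Ring A] [StarRing A] [Algebra ℂ A] [StarModule ℂ A]
    {k n : ℕ} (θ12 θ34 : ℝ)
    (B1 B2 : Matrix (Fin k) (Fin k) ℂ)
    (I : Matrix (Fin k) (Fin n) ℂ) (J : Matrix (Fin n) (Fin k) ℂ)
    (hADHM1 : (B1 * B1ᴴ - B1ᴴ * B1) + (B2 * B2ᴴ - B2ᴴ * B2) + I * Iᴴ - Jᴴ * J =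
      (2 * (θ12 + θ34) : ℂ) • (1 : Matrix (Fin k) (Fin k) ℂ))
    (hADHM2 : B1 * B2 - B2 * B1 + I * J = 0)
    (z1 z2 : A)
    (hz1 : z1 * star z1 - star z1 * z1 = ((-2 * θ12 : ℂ)) • (1 : A))
    (hz2 : z2 * star z2 - star z2 * z2 = ((-2 * θ34 : ℂ)) • (1 : A))
    (hz12 : z1 * z2 = z2 * z1)
    (hz12s : z1 * star z2 = star z2 * z1) :
    let f : ℂ → A := algebraMap ℂ A
    let Δstar : Matrix (Fin k ⊕ Fin k) (Fin n ⊕ (Fin k ⊕ Fin k)) A :=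
      Matrix.fromBlocks (I.map f)
        (hcat (B2.map f + Matrix.scalar (Fin k) z2) (B1.map f + Matrix.scalar (Fin k) z1))
        (Jᴴ.map f)
        (hcat (-(B1ᴴ.map f) - Matrix.scalar (Fin k) (star z1))
          (B2ᴴ.map f + Matrix.scalar (Fin k) (star z2)))
    ∃ Γ : Matrix (Fin k) (Fin k) A,
      Δstar * Δstarᴴ = Matrix.fromBlocks Γ 0 0 Γ := by
  intro f Δstar
  -- basic facts about the coefficient embedding
  have hfstar : Function.Semiconj (algebraMap ℂ A) star star := fun a => algebraMap_star_comm a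
  have hmapH : ∀ {p q : ℕ} (M : Matrix (Fin p) (Fin q) ℂ),
      (M.map (algebraMap ℂ A))ᴴ = Mᴴ.map (algebraMap ℂ A) := by
    intro p q M; exact (Matrix.conjTranspose_map _ hfstar).symm
  have hscH : ∀ z : A, (Matrix.scalar (Fin k) z)ᴴ = Matrix.scalar (Fin k) (star z) := by
    intro z; simp [Matrix.scalar_apply, Matrix.diagonal_conjTranspose]
  have hcomm : ∀ (M : Matrix (Fin k) (Fin k) ℂ) (z : A),
      M.map (algebraMap ℂ A) * Matrix.scalar (Fin k) z
        = Matrix.scalar (Fin k) z * M.map (algebraMap ℂ A) := by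
    intro M z; ext i j
    simp [Matrix.scalar_apply, Matrix.diagonal_mul, Matrix.mul_diagonal, Matrix.map_apply]
    exact Algebra.commutes _ _
  have hss : ∀ z w : A, Matrix.scalar (Fin k) z * Matrix.scalar (Fin k) w
      = Matrix.scalar (Fin k) (z * w) :=
    fun z w => (_root_.map_mul (Matrix.scalar (Fin k)) z w).symm
  have hsmul : ∀ c : ℂ,
      Matrix.scalar (Fin k) (c • (1 : A)) = c • (1 : Matrix (Fin k) (Fin k) A) := by
    intro c; ext i j
    simp [Matrix.scalar_apply, Matrix.diagonal_apply, Matrix.one_apply, apply_ite (c • ·)]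
  have hsmulmap : ∀ (c : ℂ) (M : Matrix (Fin k) (Fin k) ℂ),
      (c • M).map (algebraMap ℂ A) = c • M.map (algebraMap ℂ A) := by
    intro c M; ext i j
    simp only [Matrix.map_apply, Matrix.smul_apply, smul_eq_mul, _root_.map_mul]
    exact (Algebra.smul_def _ _).symm
  -- mapped ADHM equations
  have h2f := congrArg (algebraMap ℂ A).mapMatrix hADHM2
  simp only [map_sub, map_add, _root_.map_mul, Matrix.map_mul, map_zero, RingHom.mapMatrix_apply] at h2f
  have h2c := congrArg Matrix.conjTranspose hADHM2
  simp only [Matrix.conjTranspose_add, Matrix.conjTranspose_sub, Matrix.conjTranspose_mul,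
    Matrix.conjTranspose_zero] at h2c
  have h2cf := congrArg (algebraMap ℂ A).mapMatrix h2c
  simp only [map_sub, map_add, _root_.map_mul, Matrix.map_mul, map_zero, RingHom.mapMatrix_apply] at h2cf
  have h1f := congrArg (algebraMap ℂ A).mapMatrix hADHM1
  simp only [map_sub, map_add, _root_.map_mul, Matrix.map_mul, RingHom.mapMatrix_apply] at h1f
  rw [hsmulmap, Matrix.map_one _ (map_zero _) (map_one _)] at h1f
  have hsplit : (2 * ((θ12 : ℂ) + (θ34 : ℂ))) • (1 : Matrix (Fin k) (Fin k) A)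
      = ((2 * (θ12 : ℂ)) • (1 : Matrix (Fin k) (Fin k) A))
        + ((2 * (θ34 : ℂ)) • (1 : Matrix (Fin k) (Fin k) A)) := by
    rw [← add_smul]; norm_num; ring_nf
  rw [hsplit] at h1f
  -- scalar commutator facts
  have hz1M : Matrix.scalar (Fin k) z1 * Matrix.scalar (Fin k) (star z1)
      - Matrix.scalar (Fin k) (star z1) * Matrix.scalar (Fin k) z1
      = -((2 * (θ12 : ℂ)) • (1 : Matrix (Fin k) (Fin k) A)) := by
    rw [hss, hss, ← map_sub (Matrix.scalar (Fin k)), hz1, hsmul,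
      show ((-2 * (θ12 : ℂ))) = -(2 * (θ12 : ℂ)) by ring, neg_smul]
  have hz2M : Matrix.scalar (Fin k) z2 * Matrix.scalar (Fin k) (star z2)
      - Matrix.scalar (Fin k) (star z2) * Matrix.scalar (Fin k) z2
      = -((2 * (θ34 : ℂ)) • (1 : Matrix (Fin k) (Fin k) A)) := by
    rw [hss, hss, ← map_sub (Matrix.scalar (Fin k)), hz2, hsmul,
      show ((-2 * (θ34 : ℂ))) = -(2 * (θ34 : ℂ)) by ring, neg_smul]
  have hzz : Matrix.scalar (Fin k) z2 * Matrix.scalar (Fin k) z1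
      = Matrix.scalar (Fin k) z1 * Matrix.scalar (Fin k) z2 := by
    rw [hss, hss, hz12]
  have hzzs : Matrix.scalar (Fin k) (star z1) * Matrix.scalar (Fin k) (star z2)
      = Matrix.scalar (Fin k) (star z2) * Matrix.scalar (Fin k) (star z1) := by
    have h : star z1 * star z2 = star z2 * star z1 := by
      calc star z1 * star z2 = star (z2 * z1) := (star_mul z2 z1).symm
        _ = star (z1 * z2) := by rw [hz12]
        _ = star z2 * star z1 := star_mul z1 z2
    rw [hss, hss, h]
  clear hz12s
  refine ⟨I.map (algebraMap ℂ A) * Iᴴ.map (algebraMap ℂ A)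
      + ((B2.map (algebraMap ℂ A) + Matrix.scalar (Fin k) z2)
            * (B2ᴴ.map (algebraMap ℂ A) + Matrix.scalar (Fin k) (star z2))
        + (B1.map (algebraMap ℂ A) + Matrix.scalar (Fin k) z1)
            * (B1ᴴ.map (algebraMap ℂ A) + Matrix.scalar (Fin k) (star z1))), ?_⟩
  simp only [Δstar, f]
  rw [Matrix.fromBlocks_conjTranspose, Matrix.fromBlocks_multiply]
  simp only [hcat_mul_hcatH]
  simp only [Matrix.conjTranspose_add, Matrix.conjTranspose_neg, Matrix.conjTranspose_sub,
    hscH, hmapH, Matrix.conjTranspose_conjTranspose, star_star]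
  have hneg : (-B1ᴴ.map (algebraMap ℂ A) - Matrix.scalar (Fin k) (star z1)) *
      (-B1.map (algebraMap ℂ A) - Matrix.scalar (Fin k) z1)
      = (B1ᴴ.map (algebraMap ℂ A) + Matrix.scalar (Fin k) (star z1)) *
        (B1.map (algebraMap ℂ A) + Matrix.scalar (Fin k) z1) := by noncomm_ring
  rw [aux_offdiag _ _ _ _ _ h2f (hcomm B2 z1) ((hcomm B1 z2).symm) hzz,
    aux_offdiag' _ _ _ _ _ h2cf (hcomm B1ᴴ (star z2)) ((hcomm B2ᴴ (star z1)).symm) hzzs,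
    hneg,
    aux_diag _ _ _ _ _ _ _ _ _ _ _ _ h1f hz1M hz2M (hcomm B1 (star z1))
      (hcomm B2 (star z2)) ((hcomm B1ᴴ z1).symm) ((hcomm B2ᴴ z2).symm)]
end
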